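/- arXiv:2402.17476 — 5 statements merged into one kernel-verified Lean document; each statement's English description precedes it below -/
import Mathlib

section
/- Let E be a real normed vector space, (Ω, 𝒜, μ) a measure space, p a real number with 2 ≤ p < ∞, and T : E → L^p(μ) a continuous linear map. Then the functional Φ : E → ℝ defined by Φ(u) = (1/p) ∫_Ω |Tu|^p dμ is continuously Fréchet differentiable on E, and its Fréchet derivative at u ∈ E is the continuous linear functional φ ↦ ∫_Ω |Tu|^{p−2} (Tu)(Tφ) dμ. -/
/-!
`Φ = N ∘ T` with `N f = (1/p) ∫ |f|^p` on `L^p`, so by the chain rule it suffices to show that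
`N` is `C¹` with `N'(f) g = ∫ J(f) g`, where `J f = |f|^(p-2) f ∈ L^{p'}`. Both facts come from
two consequences of the mean value theorem,
`||a|^q a - |b|^q b| ≤ (q+1) max(|a|,|b|)^q |a-b|` and
`|(|a+b|^p - |a|^p)/p - |a|^(p-2) a b| ≤ (p-1) (|a|+|b|)^(p-2) b²`,
integrated with Hölder's inequality for the exponents `p/(p-2)`, `p` and `p'`: the first makes
`J : L^p → L^{p'}` locally Lipschitz, the second bounds the remainder of `N` by `O(‖g‖²)`.
-/

open MeasureTheory Topology Set Asymptotics
open scoped ENNReal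

lemma hasDerivAt_abs_rpow_mul_self {q : ℝ} (hq : 0 ≤ q) (x : ℝ) :
    HasDerivAt (fun s : ℝ => |s| ^ q * s) ((q + 1) * |x| ^ q) x := by
  rcases hq.eq_or_lt with rfl | hq
  · simpa using hasDerivAt_id' x
  rcases eq_or_ne x 0 with rfl | hx
  · rw [abs_zero, Real.zero_rpow hq.ne', mul_zero, hasDerivAt_iff_isLittleO]
    have hsmall : (fun s : ℝ => |s| ^ q) =o[𝓝 0] fun _ => (1 : ℝ) := by
      refine (isLittleO_one_iff ℝ).2 ?_
      simpa [Real.zero_rpow hq.ne'] using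
        ((continuous_abs.tendsto (0 : ℝ)).rpow_const (Or.inr hq.le))
    simpa using hsmall.mul_isBigO (isBigO_refl (fun s : ℝ => s) (𝓝 0))
  · have hsign : (SignType.sign x : ℝ) * x = |x| := by
      rcases hx.lt_or_gt with h | h <;> simp [h, abs_of_neg, abs_of_pos]
    refine (((hasDerivAt_abs hx).rpow_const (Or.inl (abs_ne_zero.2 hx))).mul
      (hasDerivAt_id' x)).congr_deriv ?_
    have hpow : |x| ^ (q - 1) * |x| = |x| ^ q := by
      rw [← Real.rpow_add_one (abs_ne_zero.2 hx), sub_add_cancel]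
    linear_combination q * |x| ^ (q - 1) * hsign + q * hpow

lemma abs_le_max_abs_abs_of_mem_uIcc {a b t : ℝ} (ht : t ∈ uIcc a b) : |t| ≤ max |a| |b| := by
  rcases mem_uIcc.1 ht with ⟨h₁, h₂⟩ | ⟨h₁, h₂⟩
  · exact abs_le_max_abs_abs h₁ h₂
  · exact (abs_le_max_abs_abs h₁ h₂).trans_eq (max_comm _ _)

lemma abs_abs_rpow_mul_self_sub_le {q : ℝ} (hq : 0 ≤ q) (a b : ℝ) :
    |(|a| ^ q * a - |b| ^ q * b)| ≤ (q + 1) * max |a| |b| ^ q * |a - b| := by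
  refine convex_uIcc b a |>.norm_image_sub_le_of_norm_hasDerivWithin_le
    (fun t _ => (hasDerivAt_abs_rpow_mul_self hq t).hasDerivWithinAt) (fun t ht => ?_)
    left_mem_uIcc right_mem_uIcc
  rw [Real.norm_eq_abs, abs_of_nonneg (by positivity), max_comm]
  gcongr
  exact abs_le_max_abs_abs_of_mem_uIcc ht

lemma abs_abs_add_rpow_sub_sub_le {p : ℝ} (hp : 2 ≤ p) (a b : ℝ) :
    |((|a + b| ^ p - |a| ^ p) / p - |a| ^ (p - 2) * a * b)|
      ≤ (p - 1) * (|a| + |b|) ^ (p - 2) * b ^ 2 := by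
  have hq : 0 ≤ p - 2 := by linarith
  have hp1 : 0 ≤ p - 1 := by linarith
  have hderiv (s : ℝ) : HasDerivAt (fun s => |s| ^ p / p - |a| ^ (p - 2) * a * s)
      (|s| ^ (p - 2) * s - |a| ^ (p - 2) * a) s := by
    refine (((hasDerivAt_abs_rpow s (by linarith)).div_const p).sub
      ((hasDerivAt_id' s).const_mul (|a| ^ (p - 2) * a))).congr_deriv ?_
    field_simp
  have hmvt := convex_uIcc a (a + b) |>.norm_image_sub_le_of_norm_hasDerivWithin_le
    (C := (p - 1) * (|a| + |b|) ^ (p - 2) * |b|)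
    (fun s _ => (hderiv s).hasDerivWithinAt) (fun s hs => ?_) left_mem_uIcc right_mem_uIcc
  · rw [Real.norm_eq_abs, Real.norm_eq_abs, add_sub_cancel_left, mul_assoc _ |b|,
      abs_mul_abs_self, ← sq] at hmvt
    convert hmvt using 2
    ring
  have hs_le : max |s| |a| ≤ |a| + |b| := by
    refine max_le ((abs_le_max_abs_abs_of_mem_uIcc hs).trans (max_le ?_ (abs_add_le a b))) ?_
    all_goals linarith [abs_nonneg b]
  have hsa : |s - a| ≤ |b| := by simpa using abs_sub_left_of_mem_uIcc hs
  calc ‖|s| ^ (p - 2) * s - |a| ^ (p - 2) * a‖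
      ≤ (p - 2 + 1) * max |s| |a| ^ (p - 2) * |s - a| := abs_abs_rpow_mul_self_sub_le hq s a
    _ ≤ (p - 1) * (|a| + |b|) ^ (p - 2) * |b| := by
      rw [show p - 2 + 1 = p - 1 by ring]
      gcongr

lemma ENNReal.conjExponent_ofReal {p : ℝ} (hp : 1 < p) :
    (ENNReal.ofReal p).conjExponent = ENNReal.ofReal p.conjExponent :=
  haveI := (Real.HolderConjugate.conjExponent hp).ennrealOfReal
  ENNReal.HolderConjugate.conjExponent_eq

instance ENNReal.fact_one_le_conjExponent {p : ℝ≥0∞} : Fact (1 ≤ p.conjExponent) :=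
  ⟨le_self_add⟩

namespace MeasureTheory

variable {Ω : Type*} [MeasurableSpace Ω] {μ : Measure Ω} {p : ℝ}

lemma norm_integral_le_toReal_eLpNorm_one {E : Type*} [NormedAddCommGroup E] [NormedSpace ℝ E]
    (f : Ω → E) : ‖∫ x, f x ∂μ‖ ≤ (eLpNorm f 1 μ).toReal := by
  simpa [eLpNorm_one_eq_lintegral_enorm, ofReal_norm] using
    norm_integral_le_lintegral_norm f

lemma eLpNorm_abs_rpow_mul_le (hp : 2 ≤ p) {F G : Ω → ℝ} (hF : AEStronglyMeasurable F μ)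
    (hG : AEStronglyMeasurable G μ) :
    eLpNorm (fun x => |F x| ^ (p - 2) * G x) (ENNReal.ofReal p).conjExponent μ
      ≤ eLpNorm F (ENNReal.ofReal p) μ ^ (p - 2) * eLpNorm G (ENNReal.ofReal p) μ := by
  -- The Hölder exponent `p / (p - 2)` of `|F| ^ (p - 2)` should be `∞` at `p = 2`, but is `0`.
  rcases hp.eq_or_lt with rfl | hp
  · have h2 : (ENNReal.ofReal 2).conjExponent = ENNReal.ofReal 2 := by
      rw [ENNReal.conjExponent_ofReal one_lt_two]; norm_num [Real.conjExponent]
    simp only [h2, sub_self, Real.rpow_zero, one_mul, ENNReal.rpow_zero]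
    rfl
  · have : ENNReal.HolderTriple (ENNReal.ofReal (p / (p - 2))) (ENNReal.ofReal p)
        (ENNReal.ofReal p).conjExponent := by
      rw [ENNReal.conjExponent_ofReal (by linarith)]
      refine Real.HolderTriple.ennrealOfReal ⟨?_, by bound, by linarith⟩
      rw [Real.conjExponent]
      field_simp
      ring
    have hFq : AEStronglyMeasurable (fun x => ‖F x‖ ^ (p - 2)) μ :=
      hF.norm.aemeasurable.pow_const _ |>.aestronglyMeasurable
    calc eLpNorm (fun x => |F x| ^ (p - 2) * G x) (ENNReal.ofReal p).conjExponent μ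
        ≤ 1 * eLpNorm (fun x => ‖F x‖ ^ (p - 2)) (ENNReal.ofReal (p / (p - 2))) μ
          * eLpNorm G (ENNReal.ofReal p) μ :=
          eLpNorm_le_eLpNorm_mul_eLpNorm_of_nnnorm hFq hG (· * ·) 1
            (ae_of_all _ fun x => by simp [nnnorm_mul])
      _ = _ := by
        rw [one_mul, eLpNorm_norm_rpow _ (by linarith), ← ENNReal.ofReal_mul (by bound),
          div_mul_cancel₀ _ (by linarith)]

lemma MemLp.abs_rpow_mul (hp : 2 ≤ p) {F G : Ω → ℝ} (hF : MemLp F (ENNReal.ofReal p) μ)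
    (hG : MemLp G (ENNReal.ofReal p) μ) :
    MemLp (fun x => |F x| ^ (p - 2) * G x) (ENNReal.ofReal p).conjExponent μ :=
  ⟨(hF.1.norm.aemeasurable.pow_const _).aestronglyMeasurable.mul hG.1,
    (eLpNorm_abs_rpow_mul_le hp hF.1 hG.1).trans_lt
      (ENNReal.mul_lt_top (ENNReal.rpow_lt_top_of_nonneg (by linarith) hF.2.ne) hG.2)⟩

lemma eLpNorm_abs_rpow_mul_mul_le (hp : 2 ≤ p) {F G H : Ω → ℝ}
    (hF : AEStronglyMeasurable F μ) (hG : AEStronglyMeasurable G μ)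
    (hH : AEStronglyMeasurable H μ) :
    eLpNorm (fun x => |F x| ^ (p - 2) * G x * H x) 1 μ
      ≤ eLpNorm F (ENNReal.ofReal p) μ ^ (p - 2) * eLpNorm G (ENNReal.ofReal p) μ
        * eLpNorm H (ENNReal.ofReal p) μ := by
  have : Fact (1 ≤ ENNReal.ofReal p) := ⟨ENNReal.one_le_ofReal.2 (by linarith)⟩
  calc eLpNorm (fun x => |F x| ^ (p - 2) * G x * H x) 1 μ
      ≤ 1 * eLpNorm (fun x => |F x| ^ (p - 2) * G x) (ENNReal.ofReal p).conjExponent μ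
        * eLpNorm H (ENNReal.ofReal p) μ :=
        eLpNorm_le_eLpNorm_mul_eLpNorm_of_nnnorm
          ((hF.norm.aemeasurable.pow_const _).aestronglyMeasurable.mul hG) hH (· * ·) 1
          (ae_of_all _ fun x => by simp [nnnorm_mul])
    _ ≤ _ := by
      rw [one_mul]
      gcongr
      exact eLpNorm_abs_rpow_mul_le hp hF hG

namespace Lp

noncomputable def dualityMap (hp : 2 ≤ p) (f : Lp ℝ (ENNReal.ofReal p) μ) :
    Lp ℝ (ENNReal.ofReal p).conjExponent μ :=
  ((Lp.memLp f).abs_rpow_mul hp (Lp.memLp f)).toLp _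

lemma coeFn_dualityMap (hp : 2 ≤ p) (f : Lp ℝ (ENNReal.ofReal p) μ) :
    dualityMap hp f =ᵐ[μ] fun x => |f x| ^ (p - 2) * f x :=
  MemLp.coeFn_toLp _

lemma integrable_abs_rpow (hp : 0 < p) (f : Lp ℝ (ENNReal.ofReal p) μ) :
    Integrable (fun x => |f x| ^ p) μ := by
  simpa [ENNReal.toReal_ofReal hp.le] using
    (Lp.memLp f).integrable_norm_rpow (by simp [hp]) ENNReal.ofReal_ne_top

lemma memLp_abs_add_abs (f g : Lp ℝ (ENNReal.ofReal p) μ) :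
    MemLp (fun x => |f x| + |g x|) (ENNReal.ofReal p) μ :=
  (Lp.memLp f).norm.add (Lp.memLp g).norm

lemma eLpNorm_abs_add_rpow_sub_le (hp : 2 ≤ p) (f g : Lp ℝ (ENNReal.ofReal p) μ) :
    eLpNorm (fun x => 1 / p * |(f + g) x| ^ p - 1 / p * |f x| ^ p - dualityMap hp f x * g x)
        1 μ
      ≤ ENNReal.ofReal (p - 1)
        * (eLpNorm (fun x => |f x| + |g x|) (ENNReal.ofReal p) μ ^ (p - 2)
          * eLpNorm g (ENNReal.ofReal p) μ * eLpNorm g (ENNReal.ofReal p) μ) := by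
  have hF := memLp_abs_add_abs f g
  refine (eLpNorm_le_mul_eLpNorm_of_ae_le_mul (c := p - 1)
    (g := fun x => |(|f x| + |g x|)| ^ (p - 2) * g x * g x) ?_ 1).trans ?_
  · filter_upwards [Lp.coeFn_add f g, coeFn_dualityMap hp f] with x hfg hJ
    have hF_abs : |(|f x| + |g x|)| = |f x| + |g x| := abs_of_nonneg (by positivity)
    rw [hfg, hJ, Pi.add_apply, Real.norm_eq_abs, Real.norm_eq_abs, hF_abs, mul_assoc _ (g x),
      abs_mul, abs_mul_self, ← sq, abs_of_nonneg (Real.rpow_nonneg (by positivity) _),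
      ← mul_assoc]
    convert abs_abs_add_rpow_sub_sub_le hp (f x) (g x) using 2
    ring
  · gcongr
    exact eLpNorm_abs_rpow_mul_mul_le hp hF.1 (Lp.aestronglyMeasurable g)
      (Lp.aestronglyMeasurable g)

variable [Fact (1 ≤ ENNReal.ofReal p)]

lemma toReal_eLpNorm_abs_add_abs_le (f g : Lp ℝ (ENNReal.ofReal p) μ) :
    (eLpNorm (fun x => |f x| + |g x|) (ENNReal.ofReal p) μ).toReal ≤ ‖f‖ + ‖g‖ := by
  rw [Lp.norm_def, Lp.norm_def,
    ← ENNReal.toReal_add (Lp.eLpNorm_ne_top f) (Lp.eLpNorm_ne_top g)]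
  refine ENNReal.toReal_mono (by simp [Lp.eLpNorm_ne_top]) ?_
  calc eLpNorm (fun x => |f x| + |g x|) (ENNReal.ofReal p) μ
      ≤ eLpNorm (fun x => ‖f x‖) (ENNReal.ofReal p) μ
        + eLpNorm (fun x => ‖g x‖) (ENNReal.ofReal p) μ :=
        eLpNorm_add_le (Lp.aestronglyMeasurable f).norm (Lp.aestronglyMeasurable g).norm Fact.out
    _ = _ := by rw [eLpNorm_norm, eLpNorm_norm]

lemma norm_dualityMap_sub_le (hp : 2 ≤ p) (f g : Lp ℝ (ENNReal.ofReal p) μ) :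
    ‖dualityMap hp f - dualityMap hp g‖
      ≤ (p - 1) * (‖f‖ + ‖g‖) ^ (p - 2) * ‖f - g‖ := by
  have hp1 : 0 ≤ p - 1 := by linarith
  have hF := memLp_abs_add_abs f g
  have hH := hF.abs_rpow_mul hp (Lp.memLp (f - g))
  calc ‖dualityMap hp f - dualityMap hp g‖ ≤ (p - 1) * ‖hH.toLp _‖ := by
        refine Lp.norm_le_mul_norm_of_ae_le_mul ?_
        filter_upwards [Lp.coeFn_sub (dualityMap hp f) (dualityMap hp g), coeFn_dualityMap hp f,
          coeFn_dualityMap hp g, hH.coeFn_toLp, Lp.coeFn_sub f g] with x hJ hJf hJg hHx hfg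
        have hF_abs : |(|f x| + |g x|)| = |f x| + |g x| := abs_of_nonneg (by positivity)
        rw [hJ, Pi.sub_apply, hJf, hJg, hHx, hfg, Pi.sub_apply, Real.norm_eq_abs,
          Real.norm_eq_abs, abs_mul, hF_abs, abs_of_nonneg (Real.rpow_nonneg (by positivity) _),
          ← mul_assoc]
        calc _ ≤ (p - 2 + 1) * max |f x| |g x| ^ (p - 2) * |f x - g x| :=
              abs_abs_rpow_mul_self_sub_le (by linarith) _ _
          _ ≤ _ := by
            rw [show p - 2 + 1 = p - 1 by ring]
            gcongr
            exact max_le_add_of_nonneg (abs_nonneg _) (abs_nonneg _)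
    _ ≤ (p - 1) * ((eLpNorm (fun x => |f x| + |g x|) (ENNReal.ofReal p) μ).toReal ^ (p - 2)
          * ‖f - g‖) := by
        rw [Lp.norm_toLp, Lp.norm_def, ENNReal.toReal_rpow, ← ENNReal.toReal_mul]
        gcongr
        · exact ENNReal.mul_ne_top (ENNReal.rpow_ne_top_of_nonneg (by linarith) hF.2.ne)
            (Lp.eLpNorm_ne_top _)
        · exact eLpNorm_abs_rpow_mul_le hp hF.1 (Lp.aestronglyMeasurable _)
    _ ≤ _ := by
      rw [mul_assoc]
      gcongr
      exact toReal_eLpNorm_abs_add_abs_le f g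

lemma continuous_dualityMap (hp : 2 ≤ p) :
    Continuous (dualityMap hp : Lp ℝ (ENNReal.ofReal p) μ → _) := by
  refine continuous_iff_continuousAt.2 fun f => tendsto_iff_norm_sub_tendsto_zero.2 ?_
  have hbound : Continuous fun g : Lp ℝ (ENNReal.ofReal p) μ =>
      (p - 1) * (‖g‖ + ‖f‖) ^ (p - 2) * ‖g - f‖ :=
    ((continuous_norm.add continuous_const).rpow_const fun _ => Or.inr (by linarith)).const_mul _
      |>.mul (continuous_id.sub continuous_const).norm
  refine squeeze_zero (fun _ => norm_nonneg _) (fun g => norm_dualityMap_sub_le hp g f) ?_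
  simpa using hbound.tendsto f

lemma integrable_dualityMap_mul (hp : 2 ≤ p) (f g : Lp ℝ (ENNReal.ofReal p) μ) :
    Integrable (fun x => dualityMap hp f x * g x) μ :=
  memLp_one_iff_integrable.1 <| (Lp.memLp g).mul (Lp.memLp (dualityMap hp f))

lemma abs_integral_abs_add_rpow_sub_le (hp : 2 ≤ p) (f g : Lp ℝ (ENNReal.ofReal p) μ) :
    |1 / p * ∫ x, |(f + g) x| ^ p ∂μ - 1 / p * ∫ x, |f x| ^ p ∂μ
        - ∫ x, dualityMap hp f x * g x ∂μ|
      ≤ (p - 1) * (‖f‖ + ‖g‖) ^ (p - 2) * ‖g‖ ^ 2 := by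
  have hp0 : 0 < p := by linarith
  have hF_pow : eLpNorm (fun x => |f x| + |g x|) (ENNReal.ofReal p) μ ^ (p - 2) ≠ ∞ :=
    ENNReal.rpow_ne_top_of_nonneg (by linarith) (memLp_abs_add_abs f g).2.ne
  have h₁ : Integrable (fun x => 1 / p * |(f + g) x| ^ p) μ :=
    (integrable_abs_rpow hp0 _).const_mul _
  have h₂ : Integrable (fun x => 1 / p * |f x| ^ p) μ := (integrable_abs_rpow hp0 f).const_mul _
  have h₁₂ : Integrable (fun x => 1 / p * |(f + g) x| ^ p - 1 / p * |f x| ^ p) μ :=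
    h₁.sub h₂
  rw [← integral_const_mul, ← integral_const_mul, ← integral_sub h₁ h₂,
    ← integral_sub h₁₂ (integrable_dualityMap_mul hp f g), ← Real.norm_eq_abs]
  calc _ ≤ _ := norm_integral_le_toReal_eLpNorm_one _
    _ ≤ _ := ENNReal.toReal_mono (by finiteness) (eLpNorm_abs_add_rpow_sub_le hp f g)
    _ ≤ _ := by
      rw [ENNReal.toReal_mul, ENNReal.toReal_mul, ENNReal.toReal_mul, ← ENNReal.toReal_rpow,
        ← Lp.norm_def, ENNReal.toReal_ofReal (by linarith), mul_assoc _ ‖g‖, ← sq,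
        ← mul_assoc]
      gcongr
      · linarith
      · exact toReal_eLpNorm_abs_add_abs_le f g

lemma hasFDerivAt_integral_abs_rpow (hp : 2 ≤ p) (f : Lp ℝ (ENNReal.ofReal p) μ) :
    HasFDerivAt (fun g : Lp ℝ (ENNReal.ofReal p) μ => 1 / p * ∫ x, |g x| ^ p ∂μ)
      ((ContinuousLinearMap.mul ℝ ℝ).lpPairing μ _ _ (dualityMap hp f)) f := by
  rw [hasFDerivAt_iff_isLittleO_nhds_zero]
  refine (Asymptotics.IsBigO.of_bound ((p - 1) * (‖f‖ + 1) ^ (p - 2)) ?_).trans_isLittleO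
    (Asymptotics.isLittleO_norm_pow_id one_lt_two)
  filter_upwards [Metric.closedBall_mem_nhds (0 : Lp ℝ (ENNReal.ofReal p) μ) one_pos] with g hg
  rw [mem_closedBall_zero_iff] at hg
  simp only [ContinuousLinearMap.lpPairing_eq_integral, ContinuousLinearMap.mul_apply']
  calc _ ≤ (p - 1) * (‖f‖ + ‖g‖) ^ (p - 2) * ‖g‖ ^ 2 :=
        abs_integral_abs_add_rpow_sub_le hp f g
    _ ≤ _ := by
      have : 0 ≤ p - 1 := by linarith
      rw [norm_pow, norm_norm]
      gcongr

lemma lpPairing_dualityMap_apply (hp : 2 ≤ p) (f g : Lp ℝ (ENNReal.ofReal p) μ) :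
    (ContinuousLinearMap.mul ℝ ℝ).lpPairing μ _ _ (dualityMap hp f) g
      = ∫ x, |f x| ^ (p - 2) * f x * g x ∂μ := by
  rw [ContinuousLinearMap.lpPairing_eq_integral]
  refine integral_congr_ae ?_
  filter_upwards [coeFn_dualityMap hp f] with x hx
  rw [ContinuousLinearMap.mul_apply', hx]

end Lp

end MeasureTheory

/-- If `T : E → L^p(μ)` is continuous linear with `2 ≤ p < ∞`, the functional
`Φ(u) = (1/p) ∫ |Tu|^p dμ` is `C¹` with derivative `φ ↦ ∫ |Tu|^{p-2} (Tu)(Tφ) dμ`. -/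
theorem power_functional_C1
    {E : Type*} [NormedAddCommGroup E] [NormedSpace ℝ E]
    {Ω : Type*} [MeasurableSpace Ω] (μ : Measure Ω)
    (p : ℝ) (hp : 2 ≤ p) [Fact (1 ≤ ENNReal.ofReal p)]
    (T : E →L[ℝ] Lp ℝ (ENNReal.ofReal p) μ) :
    ∃ Φ' : E → (E →L[ℝ] ℝ),
      Continuous Φ' ∧
      (∀ u : E, HasFDerivAt (fun v : E => (1 / p) * ∫ x, |T v x| ^ p ∂μ) (Φ' u) u) ∧
      (∀ u φ : E, Φ' u φ = ∫ x, |T u x| ^ (p - 2) * (T u x) * (T φ x) ∂μ) := by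
  set pairing := (ContinuousLinearMap.mul ℝ ℝ).lpPairing μ (ENNReal.ofReal p).conjExponent
    (ENNReal.ofReal p)
  refine ⟨fun u => (pairing (Lp.dualityMap hp (T u))).comp T, ?_,
    fun u => (Lp.hasFDerivAt_integral_abs_rpow hp (T u)).comp u T.hasFDerivAt,
    fun u φ => Lp.lpPairing_dualityMap_apply hp (T u) (T φ)⟩
  exact (pairing.continuous.comp ((Lp.continuous_dualityMap hp).comp T.continuous)).clm_comp
    continuous_const
end

section
/- Let E be a real Hilbert space, (Ω, 𝒜, μ) a measure space with μ(Ω) < ∞, p > 2 a real number, λ ∈ ℝ, and T : E → L^p(μ) a continuous linear map. Define I : E → ℝ by I(u) = (1/2)‖u‖_E² − (λ/2)∫_Ω |Tu|² dμ − (1/p)∫_Ω |Tu|^p dμ. Suppose (u_j) is a sequence in E and k > 0 a constant such that |I(u_j)| ≤ k for all j and |⟨u_j, u_j⟩_E − λ∫_Ω (Tu_j)² dμ − ∫_Ω |Tu_j|^p dμ| ≤ k(1 + ‖u_j‖_E) for all j. Then the sequence (u_j) is bounded in E, i.e. sup_j ‖u_j‖_E < ∞. -/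
open MeasureTheory
open scoped InnerProductSpace

/-!
Write `N = ‖u‖`, `b = ∫ (Tu)²` and `c = ∫ |Tu|^p`. The combination `2 I(u) - I'(u) u` equals
`(1 - 2/p) c`, so the two hypotheses bound `c` linearly in `N`; since `t² ≤ |t|^p + 1` and `μ` is
finite, `b ≤ c + μ(Ω)` is bounded linearly too. Then `N² = I'(u) u + λ b + c` is at most
`A + B N` for constants `A, B` independent of `u`, which bounds `N`.
-/

theorem sq_le_abs_rpow_add_one {p : ℝ} (hp : 2 ≤ p) (t : ℝ) : t ^ 2 ≤ |t| ^ p + 1 := by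
  rw [← sq_abs, ← Real.rpow_two]
  rcases le_or_gt |t| 1 with ht | ht
  · have : |t| ^ (2 : ℝ) ≤ 1 := Real.rpow_le_one (abs_nonneg t) ht zero_le_two
    linarith [Real.rpow_nonneg (abs_nonneg t) p]
  · linarith [Real.rpow_le_rpow_of_exponent_le ht.le hp]

theorem integral_sq_le_integral_abs_rpow_add_measureReal {Ω : Type*} [MeasurableSpace Ω]
    {μ : Measure Ω} [IsFiniteMeasure μ] {p : ℝ} (hp : 2 ≤ p) {f : Ω → ℝ}
    (hf : MemLp f (ENNReal.ofReal p) μ) :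
    ∫ x, f x ^ 2 ∂μ ≤ ∫ x, |f x| ^ p ∂μ + μ.real Set.univ := by
  have hp0 : 0 < p := by linarith
  have hf2 : MemLp f 2 μ :=
    hf.mono_exponent (by simpa using ENNReal.ofReal_le_ofReal hp)
  have hfp : Integrable (fun x => |f x| ^ p) μ := by
    simpa [Real.norm_eq_abs, ENNReal.toReal_ofReal hp0.le] using
      hf.integrable_norm_rpow (by simpa using hp0) ENNReal.ofReal_ne_top
  calc ∫ x, f x ^ 2 ∂μ ≤ ∫ x, (|f x| ^ p + 1) ∂μ :=
        integral_mono hf2.integrable_sq (hfp.add (integrable_const 1))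
          fun x => sq_le_abs_rpow_add_one hp (f x)
    _ = ∫ x, |f x| ^ p ∂μ + μ.real Set.univ := by
        rw [integral_add hfp (integrable_const 1), integral_const, smul_eq_mul, mul_one]

theorem mul_one_sub_two_div_le_of_ps_bounds {p lam k N b c : ℝ}
    (hI : |1 / 2 * N ^ 2 - lam / 2 * b - 1 / p * c| ≤ k)
    (hJ : |N ^ 2 - lam * b - c| ≤ k * (1 + N)) :
    c * (1 - 2 / p) ≤ 3 * k + k * N := by
  have hI' := (abs_le.1 hI).2
  have hJ' := (abs_le.1 hJ).1
  have hcomb : c * (1 - 2 / p) = 2 * (1 / 2 * N ^ 2 - lam / 2 * b - 1 / p * c)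
      - (N ^ 2 - lam * b - c) := by ring
  linarith

theorem le_abs_add_abs_add_one_of_sq_le {x A B : ℝ} (hx : 0 ≤ x) (h : x ^ 2 ≤ A + B * x) :
    x ≤ |A| + |B| + 1 := by
  by_contra! hlt
  have hx1 : 1 < x := by linarith [abs_nonneg A, abs_nonneg B]
  nlinarith [mul_lt_mul_of_pos_left hlt (by linarith : 0 < x), le_abs_self A,
    mul_le_mul_of_nonneg_left (le_abs_self B) hx, mul_le_mul_of_nonneg_left hx1.le (abs_nonneg A)]

theorem exists_sq_le_add_mul_of_ps_bounds {p : ℝ} (hp : 2 < p) (lam k M : ℝ) :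
    ∃ A B : ℝ, ∀ N b c : ℝ, 0 ≤ b → b ≤ c + M →
      |1 / 2 * N ^ 2 - lam / 2 * b - 1 / p * c| ≤ k →
      |N ^ 2 - lam * b - c| ≤ k * (1 + N) → N ^ 2 ≤ A + B * N := by
  have hp0 : p ≠ 0 := by linarith
  have hp2 : p - 2 ≠ 0 := by linarith
  have hD : 0 ≤ p / (p - 2) := div_nonneg (by linarith) (by linarith)
  refine ⟨k + |lam| * M + 3 * (1 + |lam|) * k * (p / (p - 2)),
    k + (1 + |lam|) * k * (p / (p - 2)),
    fun N b c hb hbc hI hJ => ?_⟩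
  have hc : c ≤ (3 * k + k * N) * (p / (p - 2)) := by
    calc c = c * (1 - 2 / p) * (p / (p - 2)) := by field_simp
      _ ≤ (3 * k + k * N) * (p / (p - 2)) :=
        mul_le_mul_of_nonneg_right (mul_one_sub_two_div_le_of_ps_bounds hI hJ) hD
  have hlamb : lam * b ≤ |lam| * (c + M) :=
    (mul_le_mul_of_nonneg_right (le_abs_self lam) hb).trans
      (mul_le_mul_of_nonneg_left hbc (abs_nonneg lam))
  nlinarith [(abs_le.1 hJ).2, mul_le_mul_of_nonneg_left hc (by positivity : 0 ≤ 1 + |lam|)]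

theorem PS_sequence_bounded_general
    {E : Type*} [NormedAddCommGroup E] [InnerProductSpace ℝ E]
    {Ω : Type*} [MeasurableSpace Ω] (μ : Measure Ω) [IsFiniteMeasure μ]
    (p : ℝ) (hp : 2 < p) [Fact (1 ≤ ENNReal.ofReal p)]
    (lam : ℝ)
    (T : E →L[ℝ] Lp ℝ (ENNReal.ofReal p) μ)
    (I : E → ℝ)
    (hI : ∀ u : E, I u = (1 / 2) * ‖u‖ ^ 2 - (lam / 2) * ∫ x, (T u x) ^ 2 ∂μ
      - (1 / p) * ∫ x, |T u x| ^ p ∂μ)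
    (u : ℕ → E) (k : ℝ)
    (hIbound : ∀ j, |I (u j)| ≤ k)
    (hderivbound : ∀ j,
      |⟪u j, u j⟫_ℝ - lam * ∫ x, (T (u j) x) ^ 2 ∂μ - ∫ x, |T (u j) x| ^ p ∂μ|
        ≤ k * (1 + ‖u j‖)) :
    ∃ C : ℝ, ∀ j, ‖u j‖ ≤ C := by
  obtain ⟨A, B, hAB⟩ := exists_sq_le_add_mul_of_ps_bounds hp lam k (μ.real Set.univ)
  refine ⟨|A| + |B| + 1, fun j => le_abs_add_abs_add_one_of_sq_le (norm_nonneg _)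
    (hAB _ (∫ x, (T (u j) x) ^ 2 ∂μ) (∫ x, |T (u j) x| ^ p ∂μ) ?_ ?_ ?_ ?_)⟩
  · exact integral_nonneg fun x => sq_nonneg _
  · exact integral_sq_le_integral_abs_rpow_add_measureReal hp.le (Lp.memLp _)
  · rw [← hI]
    exact hIbound j
  · rw [← real_inner_self_eq_norm_sq]
    exact hderivbound j

/-- Palais–Smale type bounds imply boundedness of the sequence. -/
theorem PS_sequence_bounded
    {E : Type*} [NormedAddCommGroup E] [InnerProductSpace ℝ E] [CompleteSpace E]
    {Ω : Type*} [MeasurableSpace Ω] (μ : Measure Ω) [IsFiniteMeasure μ]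
    (p : ℝ) (hp : 2 < p) [Fact (1 ≤ ENNReal.ofReal p)]
    (lam : ℝ)
    (T : E →L[ℝ] Lp ℝ (ENNReal.ofReal p) μ)
    (I : E → ℝ)
    (hI : ∀ u : E, I u = (1 / 2) * ‖u‖ ^ 2 - (lam / 2) * ∫ x, (T u x) ^ 2 ∂μ
      - (1 / p) * ∫ x, |T u x| ^ p ∂μ)
    (u : ℕ → E) (k : ℝ) (hk : 0 < k)
    (hIbound : ∀ j, |I (u j)| ≤ k)
    (hderivbound : ∀ j,
      |⟪u j, u j⟫_ℝ - lam * ∫ x, (T (u j) x) ^ 2 ∂μ - ∫ x, |T (u j) x| ^ p ∂μ|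
        ≤ k * (1 + ‖u j‖)) :
    ∃ C : ℝ, ∀ j, ‖u j‖ ≤ C :=
  PS_sequence_bounded_general μ p hp lam T I hI u k hIbound hderivbound
end

section
/- Let (Ω, 𝒜, μ) be a measure space with μ(Ω) < ∞ and let p ≥ 2 be a real number. Let (u_j) be a sequence in L^p(μ) with sup_j ‖u_j‖_p < ∞ and suppose u_j → u μ-almost everywhere on Ω for some measurable function u. Then u ∈ L^p(μ) and the sequence |u_j|^{p−2} u_j converges weakly in L^{p/(p−1)}(μ) to |u|^{p−2} u; that is, for every φ ∈ L^p(μ) one has ∫_Ω |u_j|^{p−2} u_j φ dμ → ∫_Ω |u|^{p−2} u φ dμ as j → ∞. -/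
open MeasureTheory Filter Topology
open scoped ENNReal NNReal

/-! Since `‖|w|^(p-2) w‖_{p/(p-1)} = ‖w‖_p^(p-1)`, the functions `|u_j|^(p-2) u_j` are bounded in
`L^{p/(p-1)}`; by Hölder and the absolute continuity of `∫ |φ|^p`, their products with a fixed
`φ ∈ L^p` are uniformly integrable. They converge a.e. because `t ↦ |t|^(p-2) t` is continuous, so
Vitali's convergence theorem gives convergence in `L^1`, hence of the integrals. Fatou's lemma
gives `v ∈ L^p`. -/

section

variable {Ω : Type*} [MeasurableSpace Ω] {μ : Measure Ω}

theorem memLp_of_tendsto_ae_of_eLpNorm_le {E : Type*} [NormedAddCommGroup E] {p : ℝ≥0∞}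
    {K : ℝ≥0} {f : ℕ → Ω → E} {g : Ω → E} (hf : ∀ n, AEStronglyMeasurable (f n) μ)
    (hbound : ∀ n, eLpNorm (f n) p μ ≤ K)
    (hlim : ∀ᵐ x ∂μ, Tendsto (fun n => f n x) atTop (𝓝 (g x))) :
    MemLp g p μ :=
  ⟨aestronglyMeasurable_of_tendsto_ae atTop hf hlim,
    (Lp.eLpNorm_le_of_ae_tendsto (Eventually.of_forall hbound) hf hlim).trans_lt ENNReal.coe_lt_top⟩

theorem unifIntegrable_mul_of_eLpNorm_le {ι : Type*} {p q : ℝ≥0∞} [q.HolderConjugate p]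
    (hp : p ≠ ∞) {K : ℝ≥0} {f : ι → Ω → ℝ} (hf : ∀ i, AEStronglyMeasurable (f i) μ)
    (hbound : ∀ i, eLpNorm (f i) q μ ≤ K) {φ : Ω → ℝ} (hφ : MemLp φ p μ) :
    UnifIntegrable (fun i x => f i x * φ x) 1 μ := by
  intro ε hε
  have hK : (0 : ℝ) < K + 1 := by positivity
  obtain ⟨δ, hδ, hφδ⟩ := hφ.eLpNorm_indicator_le (ENNReal.HolderConjugate.one_le p q) hp
    (div_pos hε hK)
  refine ⟨δ, hδ, fun i s hs hμs => ?_⟩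
  calc eLpNorm (s.indicator fun x => f i x * φ x) 1 μ
      = eLpNorm (s.indicator φ • f i) 1 μ := by
        congr 1; ext x; simp [Set.indicator_mul_right, mul_comm]
    _ ≤ eLpNorm (f i) q μ * eLpNorm (s.indicator φ) p μ := by
        rw [mul_comm]; exact eLpNorm_smul_le_mul_eLpNorm (hf i) (hφ.1.indicator hs)
    _ ≤ K * ENNReal.ofReal (ε / (K + 1)) := by gcongr; exacts [hbound i, hφδ s hs hμs]
    _ ≤ ENNReal.ofReal ε := by
        rw [← ENNReal.ofReal_coe_nnreal, ← ENNReal.ofReal_mul K.coe_nonneg]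
        refine ENNReal.ofReal_le_ofReal ?_
        rw [mul_div_assoc']
        exact div_le_of_le_mul₀ hK.le hε.le (by nlinarith)

theorem tendsto_integral_mul_of_tendsto_ae_of_eLpNorm_le [IsFiniteMeasure μ] {p q : ℝ≥0∞}
    [q.HolderConjugate p] (hp : p ≠ ∞) {K : ℝ≥0} {f : ℕ → Ω → ℝ} {g : Ω → ℝ}
    (hf : ∀ n, AEStronglyMeasurable (f n) μ) (hbound : ∀ n, eLpNorm (f n) q μ ≤ K)
    (hlim : ∀ᵐ x ∂μ, Tendsto (fun n => f n x) atTop (𝓝 (g x))) {φ : Ω → ℝ} (hφ : MemLp φ p μ) :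
    Tendsto (fun n => ∫ x, f n x * φ x ∂μ) atTop (𝓝 (∫ x, g x * φ x ∂μ)) := by
  have hgφ : MemLp (fun x => g x * φ x) 1 μ :=
    hφ.mul' (memLp_of_tendsto_ae_of_eLpNorm_le hf hbound hlim)
  have hfφ : ∀ n, MemLp (fun x => f n x * φ x) 1 μ := fun n =>
    hφ.mul' ⟨hf n, (hbound n).trans_lt ENNReal.coe_lt_top⟩
  refine tendsto_integral_of_L1' _ hgφ.1 (Eventually.of_forall fun n => (hfφ n).integrable le_rfl)
    (tendsto_Lp_finite_of_tendsto_ae le_rfl ENNReal.one_ne_top (fun n => (hfφ n).1) hgφ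
      (unifIntegrable_mul_of_eLpNorm_le hp hf hbound hφ) ?_)
  filter_upwards [hlim] with x hx using hx.mul_const (φ x)

end

section

variable {p : ℝ}

theorem abs_abs_rpow_sub_two_mul_self (hp : p ≠ 1) (x : ℝ) :
    |(|x| ^ (p - 2) * x)| = |x| ^ (p - 1) := by
  rcases eq_or_ne x 0 with rfl | hx
  · simp [Real.zero_rpow (sub_ne_zero.2 hp)]
  · rw [abs_mul, abs_of_nonneg (by positivity), show p - 1 = p - 2 + 1 by ring,
      Real.rpow_add (abs_pos.2 hx), Real.rpow_one]

theorem eLpNorm_abs_rpow_sub_two_mul_self {Ω : Type*} [MeasurableSpace Ω] {μ : Measure Ω}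
    (hp : 1 < p) (w : Ω → ℝ) :
    eLpNorm (fun x => |w x| ^ (p - 2) * w x) (ENNReal.ofReal (p / (p - 1))) μ
      = eLpNorm w (ENNReal.ofReal p) μ ^ (p - 1) := by
  have hp1 : 0 < p - 1 := sub_pos.2 hp
  calc eLpNorm (fun x => |w x| ^ (p - 2) * w x) (ENNReal.ofReal (p / (p - 1))) μ
      = eLpNorm (fun x => ‖w x‖ ^ (p - 1)) (ENNReal.ofReal (p / (p - 1))) μ :=
        eLpNorm_congr_norm_ae (Eventually.of_forall fun x => by
          simp only [Real.norm_eq_abs, abs_abs_rpow_sub_two_mul_self hp.ne',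
            abs_of_nonneg (Real.rpow_nonneg (abs_nonneg (w x)) _)])
    _ = eLpNorm w (ENNReal.ofReal p) μ ^ (p - 1) := by
        rw [eLpNorm_norm_rpow w hp1, ← ENNReal.ofReal_mul (by positivity),
          div_mul_cancel₀ _ hp1.ne']

theorem continuous_abs_rpow_sub_two_mul_self (hp : 2 ≤ p) :
    Continuous fun x : ℝ => |x| ^ (p - 2) * x :=
  ((Real.continuous_rpow_const (sub_nonneg.2 hp)).comp continuous_abs).mul continuous_id

end

theorem weak_convergence_of_power_general
    {Ω : Type*} [MeasurableSpace Ω] (μ : Measure Ω) [IsFiniteMeasure μ]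
    (p : ℝ) (hp : 2 ≤ p) [Fact (1 ≤ ENNReal.ofReal p)]
    (u : ℕ → Lp ℝ (ENNReal.ofReal p) μ)
    (C : ℝ) (hbound : ∀ j, ‖u j‖ ≤ C)
    (v : Ω → ℝ)
    (hae : ∀ᵐ x ∂μ, Tendsto (fun j => u j x) atTop (𝓝 (v x))) :
    MemLp v (ENNReal.ofReal p) μ ∧
    ∀ φ : Lp ℝ (ENNReal.ofReal p) μ,
      Tendsto (fun j => ∫ x, |u j x| ^ (p - 2) * (u j x) * φ x ∂μ) atTop
        (𝓝 (∫ x, |v x| ^ (p - 2) * (v x) * φ x ∂μ)) := by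
  have hp1 : 1 < p := by linarith
  have hu : ∀ j, eLpNorm (u j) (ENNReal.ofReal p) μ ≤ C.toNNReal := fun j => by
    rw [← ENNReal.ofReal_toReal (Lp.eLpNorm_ne_top (u j)), ← Lp.norm_def]
    exact ENNReal.ofReal_le_ofReal (hbound j)
  refine ⟨memLp_of_tendsto_ae_of_eLpNorm_le (fun j => Lp.aestronglyMeasurable (u j)) hu hae,
    fun φ => ?_⟩
  have : (ENNReal.ofReal (p / (p - 1))).HolderConjugate (ENNReal.ofReal p) :=
    (Real.HolderConjugate.conjExponent hp1).symm.ennrealOfReal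
  have hF := continuous_abs_rpow_sub_two_mul_self hp
  refine tendsto_integral_mul_of_tendsto_ae_of_eLpNorm_le ENNReal.ofReal_ne_top
    (q := ENNReal.ofReal (p / (p - 1))) (K := C.toNNReal ^ (p - 1))
    (fun j => hF.comp_aestronglyMeasurable (Lp.aestronglyMeasurable (u j))) (fun j => ?_) ?_
    (Lp.memLp φ)
  · rw [eLpNorm_abs_rpow_sub_two_mul_self hp1, ENNReal.coe_rpow_of_nonneg _ (by linarith)]
    gcongr
    exact hu j
  · filter_upwards [hae] with x hx using (hF.tendsto (v x)).comp hx

/-- Bounded in `L^p` plus a.e. convergence implies weak convergence of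
`|u_j|^{p-2} u_j` to `|u|^{p-2} u` in `L^{p/(p-1)}`. -/
theorem weak_convergence_of_power
    {Ω : Type*} [MeasurableSpace Ω] (μ : Measure Ω) [IsFiniteMeasure μ]
    (p : ℝ) (hp : 2 ≤ p) [Fact (1 ≤ ENNReal.ofReal p)]
    (u : ℕ → Lp ℝ (ENNReal.ofReal p) μ)
    (C : ℝ) (hbound : ∀ j, ‖u j‖ ≤ C)
    (v : Ω → ℝ) (hv : Measurable v)
    (hae : ∀ᵐ x ∂μ, Tendsto (fun j => u j x) atTop (𝓝 (v x))) :
    MemLp v (ENNReal.ofReal p) μ ∧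
    ∀ φ : Lp ℝ (ENNReal.ofReal p) μ,
      Tendsto (fun j => ∫ x, |u j x| ^ (p - 2) * (u j x) * φ x ∂μ) atTop
        (𝓝 (∫ x, |v x| ^ (p - 2) * (v x) * φ x ∂μ)) :=
  weak_convergence_of_power_general μ p hp u C hbound v hae
end

section
/- Let (Ω, 𝒜, μ) be a measure space with μ(Ω) < ∞ and let p ≥ 2 be a real number. Let (u_j) be a sequence in L^p(μ) converging weakly in L^p(μ) to u ∈ L^p(μ) and suppose in addition that u_j → u μ-almost everywhere on Ω. Then ∫_Ω (|u_j|^{p−2} u_j − |u|^{p−2} u)(u_j − u) dμ − ∫_Ω |u_j − u|^p dμ → 0 as j → ∞; equivalently, ∫_Ω (|u_j|^{p−2} u_j − |u|^{p−2} u)(u_j − u) dμ = ‖u_j − u‖_p^p + o(1). -/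
/-!
Let `J(t) = |t|^{p-2} t` be the duality map and `w_j = u_j - u`. Since `J(w) w = |w|^p`, the
quantity in question is `∫ (J(u + w_j) - J(u) - J(w_j)) w_j`. The mean value theorem gives
`|J(a + b) - J(a) - J(b)| ≲ |a|^{p-2} |b| + |a| |b|^{p-2}`, so the integrand is dominated by
`|u|^{p-2} |w_j|^2 + |u| |w_j|^{p-1}`. By Hölder's inequality these functions are uniformly
integrable as soon as `(w_j)` is bounded in `L^p`, and that follows from the weak convergence by
Banach–Steinhaus, because pairing `f` with `J(f) ∈ L^{p/(p-1)}` recovers `‖f‖_p`. The integrand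
tends to `0` a.e., so Vitali's convergence theorem concludes.
-/

open MeasureTheory Filter Topology
open scoped ENNReal

noncomputable def dualityMap (p t : ℝ) : ℝ := |t| ^ (p - 2) * t

section DualityMap

variable {p : ℝ}

lemma dualityMap_mul_self (hp : p ≠ 0) (t : ℝ) : dualityMap p t * t = |t| ^ p := by
  rcases eq_or_ne t 0 with rfl | ht
  · simp [dualityMap, Real.zero_rpow hp]
  · rw [dualityMap, mul_assoc, ← abs_mul_abs_self, ← mul_assoc,
      ← Real.rpow_add_one (abs_ne_zero.2 ht), ← Real.rpow_add_one (abs_ne_zero.2 ht)]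
    ring_nf

lemma abs_dualityMap (hp : p ≠ 1) (t : ℝ) : |dualityMap p t| = |t| ^ (p - 1) := by
  rcases eq_or_ne t 0 with rfl | ht
  · simp [dualityMap, Real.zero_rpow (sub_ne_zero.2 hp)]
  · rw [dualityMap, abs_mul, abs_of_nonneg (by positivity),
      ← Real.rpow_add_one (abs_ne_zero.2 ht)]
    ring_nf

lemma measurable_dualityMap (p : ℝ) : Measurable (dualityMap p) := by
  unfold dualityMap
  fun_prop

lemma hasDerivAt_dualityMap (hp : 2 ≤ p) (t : ℝ) :
    HasDerivAt (dualityMap p) ((p - 1) * |t| ^ (p - 2)) t := by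
  rcases eq_or_ne t 0 with rfl | ht
  · have hslope : ∀ s ≠ (0 : ℝ), slope (dualityMap p) 0 s = |s| ^ (p - 2) := fun s hs => by
      simp [slope_def_field, dualityMap, hs]
    have hcont : Continuous fun s : ℝ => |s| ^ (p - 2) :=
      (Real.continuous_rpow_const (by linarith)).comp continuous_abs
    have hval : (p - 1) * |(0 : ℝ)| ^ (p - 2) = |(0 : ℝ)| ^ (p - 2) := by
      rcases hp.eq_or_lt with rfl | hp
      · norm_num
      · simp [Real.zero_rpow (by linarith : p - 2 ≠ 0)]
    rw [hasDerivAt_iff_tendsto_slope, hval]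
    exact (hcont.tendsto 0).mono_left nhdsWithin_le_nhds |>.congr'
      (eventually_nhdsWithin_of_forall fun s hs => (hslope s hs).symm)
  · have h := ((hasDerivAt_abs ht).rpow_const (p := p - 2) (Or.inl (abs_ne_zero.2 ht))).mul
      (hasDerivAt_id t)
    refine h.congr_deriv ?_
    have hpow : |t| ^ (p - 2 - 1) * t * SignType.sign t = |t| ^ (p - 2) := by
      rw [mul_assoc, self_mul_sign, ← Real.rpow_add_one (abs_ne_zero.2 ht), sub_add_cancel]
    simp only [id]
    linear_combination (p - 2) * hpow

lemma continuous_dualityMap (hp : 2 ≤ p) : Continuous (dualityMap p) :=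
  continuous_iff_continuousAt.2 fun t => (hasDerivAt_dualityMap hp t).continuousAt

lemma abs_dualityMap_sub_le (hp : 2 ≤ p) (x y : ℝ) :
    |dualityMap p x - dualityMap p y| ≤ (p - 1) * max |x| |y| ^ (p - 2) * |x - y| := by
  have hp1 : 0 ≤ p - 1 := by linarith
  have hbound : ∀ z ∈ Set.uIcc y x,
      ‖(p - 1) * |z| ^ (p - 2)‖ ≤ (p - 1) * max |x| |y| ^ (p - 2) := by
    intro z hz
    have hz' : |z| ≤ max |x| |y| := by
      rcases Set.mem_uIcc.mp hz with ⟨h₁, h₂⟩ | ⟨h₁, h₂⟩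
      · exact (abs_le_max_abs_abs h₁ h₂).trans_eq (max_comm _ _)
      · exact abs_le_max_abs_abs h₁ h₂
    rw [Real.norm_of_nonneg (by positivity)]
    gcongr
  simpa only [Real.norm_eq_abs] using Convex.norm_image_sub_le_of_norm_hasDerivWithin_le
    (fun z _ => (hasDerivAt_dualityMap hp z).hasDerivWithinAt) hbound (convex_uIcc y x)
    Set.left_mem_uIcc Set.right_mem_uIcc

lemma abs_dualityMap_add_sub_le_of_abs_le (hp : 2 ≤ p) {a b : ℝ} (hba : |b| ≤ |a|) :
    |dualityMap p (a + b) - dualityMap p a - dualityMap p b|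
      ≤ ((p - 1) * 2 ^ (p - 2) + 1) * (|a| ^ (p - 2) * |b| + |a| * |b| ^ (p - 2)) := by
  have hp1 : 0 ≤ p - 1 := by linarith
  have hmax : max |a + b| |a| ≤ 2 * |a| :=
    max_le ((abs_add_le a b).trans (by linarith)) (by linarith [abs_nonneg a])
  have hfirst : |dualityMap p (a + b) - dualityMap p a|
      ≤ (p - 1) * 2 ^ (p - 2) * (|a| ^ (p - 2) * |b|) := calc
    _ ≤ (p - 1) * max |a + b| |a| ^ (p - 2) * |b| := by
      simpa using abs_dualityMap_sub_le hp (a + b) a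
    _ ≤ (p - 1) * (2 * |a|) ^ (p - 2) * |b| := by gcongr
    _ = (p - 1) * 2 ^ (p - 2) * (|a| ^ (p - 2) * |b|) := by
      rw [Real.mul_rpow zero_le_two (abs_nonneg a)]; ring
  have hsecond : |dualityMap p b| ≤ |a| * |b| ^ (p - 2) := calc
    |dualityMap p b| = |b| ^ (p - 2) * |b| := by
      rw [dualityMap, abs_mul, abs_of_nonneg (by positivity)]
    _ ≤ |a| * |b| ^ (p - 2) := by rw [mul_comm]; gcongr
  have hX : 0 ≤ |a| ^ (p - 2) * |b| := by positivity
  have hY : 0 ≤ |a| * |b| ^ (p - 2) := by positivity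
  have hc : 0 ≤ (p - 1) * 2 ^ (p - 2) := by positivity
  calc _ ≤ |dualityMap p (a + b) - dualityMap p a| + |dualityMap p b| := abs_sub _ _
    _ ≤ _ := by nlinarith

lemma exists_abs_dualityMap_add_sub_mul_le (hp : 2 ≤ p) : ∃ C : ℝ, ∀ a b : ℝ,
    |(dualityMap p (a + b) - dualityMap p a - dualityMap p b) * b|
      ≤ C * |a| ^ (p - 2) * |b| ^ (2 : ℝ) + C * |a| * |b| ^ (p - 1) := by
  refine ⟨(p - 1) * 2 ^ (p - 2) + 1, fun a b => ?_⟩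
  have hsymm : |dualityMap p (a + b) - dualityMap p a - dualityMap p b|
      ≤ ((p - 1) * 2 ^ (p - 2) + 1) * (|a| ^ (p - 2) * |b| + |a| * |b| ^ (p - 2)) := by
    rcases le_total |b| |a| with h | h
    · exact abs_dualityMap_add_sub_le_of_abs_le hp h
    · have := abs_dualityMap_add_sub_le_of_abs_le hp h
      rw [add_comm b a, sub_right_comm] at this
      linarith
  have hpow : |b| ^ (p - 1) = |b| ^ (p - 2) * |b| := by
    rw [← Real.rpow_add_one' (abs_nonneg b) (by linarith)]; ring_nf
  rw [abs_mul, Real.rpow_two, hpow]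
  calc _ ≤ ((p - 1) * 2 ^ (p - 2) + 1) * (|a| ^ (p - 2) * |b| + |a| * |b| ^ (p - 2)) * |b| := by
        gcongr
    _ = _ := by ring

end DualityMap

namespace MeasureTheory

variable {Ω : Type*} [MeasurableSpace Ω] {μ : Measure Ω} {p : ℝ}

lemma eLpNorm_abs_rpow {q r : ℝ} (hq : 0 < q) (hr : 0 ≤ r) (g : Ω → ℝ) :
    eLpNorm (fun x => |g x| ^ q) (ENNReal.ofReal (r / q)) μ
      = eLpNorm g (ENNReal.ofReal r) μ ^ q := by
  have h := eLpNorm_norm_rpow (μ := μ) (p := ENNReal.ofReal (r / q)) g hq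
  rwa [← ENNReal.ofReal_mul (by positivity), div_mul_cancel₀ r hq.ne'] at h

lemma MemLp.abs_rpow {q r : ℝ} {g : Ω → ℝ} (hg : MemLp g (ENNReal.ofReal r) μ) (hq : 0 < q)
    (hr : 0 ≤ r) : MemLp (fun x => |g x| ^ q) (ENNReal.ofReal (r / q)) μ :=
  ⟨(hg.1.norm.aemeasurable.pow_const q).aestronglyMeasurable, by
    rw [eLpNorm_abs_rpow hq hr]; exact ENNReal.rpow_lt_top_of_nonneg hq.le hg.2.ne⟩

lemma integral_abs_rpow_eq_toReal_eLpNorm_rpow (hp : 0 < p) {g : Ω → ℝ}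
    (hg : AEStronglyMeasurable g μ) :
    ∫ x, |g x| ^ p ∂μ = (eLpNorm g (ENNReal.ofReal p) μ).toReal ^ p := by
  have h := eLpNorm_abs_rpow (μ := μ) hp hp.le g
  rw [div_self hp.ne', ENNReal.ofReal_one, eLpNorm_one_eq_lintegral_enorm] at h
  rw [ENNReal.toReal_rpow, ← h, ← integral_norm_eq_lintegral_enorm (f := fun x => |g x| ^ p)
    (hg.norm.aemeasurable.pow_const p).aestronglyMeasurable]
  exact integral_congr_ae (ae_of_all _ fun x => by
    simp [abs_of_nonneg (Real.rpow_nonneg (abs_nonneg (g x)) _)])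

lemma eLpNorm_dualityMap_comp (hp : 1 < p) (g : Ω → ℝ) :
    eLpNorm (fun x => dualityMap p (g x)) (ENNReal.ofReal (p / (p - 1))) μ
      = eLpNorm g (ENNReal.ofReal p) μ ^ (p - 1) := by
  rw [← eLpNorm_abs_rpow (by linarith) (by linarith)]
  exact eLpNorm_congr_norm_ae (ae_of_all _ fun x => by
    simp [abs_dualityMap hp.ne', abs_of_nonneg (Real.rpow_nonneg (abs_nonneg (g x)) _)])

lemma MemLp.dualityMap_comp (hp : 1 < p) {g : Ω → ℝ} (hg : MemLp g (ENNReal.ofReal p) μ) :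
    MemLp (fun x => dualityMap p (g x)) (ENNReal.ofReal (p / (p - 1))) μ :=
  ⟨(measurable_dualityMap p).comp_aemeasurable hg.1.aemeasurable |>.aestronglyMeasurable, by
    rw [eLpNorm_dualityMap_comp hp]
    exact ENNReal.rpow_lt_top_of_nonneg (by linarith) hg.2.ne⟩

theorem Lp.norm_le_norm_lpPairing_mul (hp : 1 < p) [Fact (1 ≤ ENNReal.ofReal p)]
    [Fact (1 ≤ ENNReal.ofReal (p / (p - 1)))]
    [ENNReal.HolderConjugate (ENNReal.ofReal p) (ENNReal.ofReal (p / (p - 1)))]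
    (f : Lp ℝ (ENNReal.ofReal p) μ) :
    ‖f‖ ≤ ‖(ContinuousLinearMap.mul ℝ ℝ).lpPairing μ _ (ENNReal.ofReal (p / (p - 1))) f‖ := by
  set T := (ContinuousLinearMap.mul ℝ ℝ).lpPairing μ _ (ENNReal.ofReal (p / (p - 1))) f
  have hf := Lp.memLp f
  set φ := (hf.dualityMap_comp hp).toLp _
  have hφ : ‖φ‖ = ‖f‖ ^ (p - 1) := by
    rw [Lp.norm_toLp, eLpNorm_dualityMap_comp hp, Lp.norm_def, ENNReal.toReal_rpow]
  have hTφ : T φ = ‖f‖ ^ p := by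
    rw [ContinuousLinearMap.lpPairing_eq_integral, Lp.norm_def,
      ← integral_abs_rpow_eq_toReal_eLpNorm_rpow (by linarith) hf.1]
    refine integral_congr_ae ?_
    filter_upwards [(hf.dualityMap_comp hp).coeFn_toLp] with x hx
    rw [ContinuousLinearMap.mul_apply', hx, mul_comm, dualityMap_mul_self (by linarith)]
  have key : ‖f‖ ^ (p - 1) * ‖f‖ ≤ ‖f‖ ^ (p - 1) * ‖T‖ := calc
    ‖f‖ ^ (p - 1) * ‖f‖ = T φ := by
      rw [hTφ, ← Real.rpow_add_one' (norm_nonneg f) (by linarith), sub_add_cancel]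
    _ ≤ ‖T‖ * ‖φ‖ := (le_abs_self _).trans (T.le_opNorm φ)
    _ = ‖f‖ ^ (p - 1) * ‖T‖ := by rw [hφ, mul_comm]
  rcases (norm_nonneg f).eq_or_lt with hf0 | hf0
  · rw [← hf0]; exact norm_nonneg T
  · exact le_of_mul_le_mul_left key (by positivity)

theorem Lp.exists_norm_le_of_bddAbove_integral_mul {ι : Type*} (hp : 1 < p)
    [Fact (1 ≤ ENNReal.ofReal p)] {u : ι → Lp ℝ (ENNReal.ofReal p) μ}
    (hu : ∀ φ : Ω → ℝ, MemLp φ (ENNReal.ofReal (p / (p - 1))) μ →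
      BddAbove (Set.range fun i => |∫ x, u i x * φ x ∂μ|)) :
    ∃ C, ∀ i, ‖u i‖ ≤ C := by
  have hpq : p.HolderConjugate (p / (p - 1)) := Real.HolderConjugate.conjExponent hp
  have := hpq.ennrealOfReal
  have : Fact (1 ≤ ENNReal.ofReal (p / (p - 1))) := ⟨ENNReal.one_le_ofReal.2 hpq.symm.lt.le⟩
  set T := fun i =>
    (ContinuousLinearMap.mul ℝ ℝ).lpPairing μ _ (ENNReal.ofReal (p / (p - 1))) (u i)
  obtain ⟨C, hC⟩ := banach_steinhaus (g := T) fun φ => by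
    obtain ⟨C, hC⟩ := hu φ (Lp.memLp φ)
    refine ⟨C, fun i => ?_⟩
    rw [ContinuousLinearMap.lpPairing_eq_integral]
    exact hC ⟨i, rfl⟩
  exact ⟨C, fun i => (norm_le_norm_lpPairing_mul hp (u i)).trans (hC i)⟩

theorem UnifIntegrable.of_norm_le {ι E F : Type*} [NormedAddCommGroup E] [NormedAddCommGroup F]
    {q : ℝ≥0∞} {f : ι → Ω → E} {g : ι → Ω → F} (hg : UnifIntegrable g q μ)
    (hfg : ∀ i x, ‖f i x‖ ≤ ‖g i x‖) : UnifIntegrable f q μ := by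
  intro ε hε
  obtain ⟨δ, hδ, hg⟩ := hg hε
  refine ⟨δ, hδ, fun i s hs hμs => (eLpNorm_mono fun x => ?_).trans (hg i s hs hμs)⟩
  by_cases hx : x ∈ s <;> simp [hx, hfg]

theorem unifIntegrable_mul_of_memLp {ι : Type*} {r s : ℝ≥0∞} [ENNReal.HolderTriple r s 1]
    (hr : 1 ≤ r) (hr_top : r ≠ ∞) {g : Ω → ℝ} (hg : MemLp g r μ) {h : ι → Ω → ℝ}
    (hh : ∀ i, AEStronglyMeasurable (h i) μ) {C : ℝ≥0∞} (hC_top : C ≠ ∞)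
    (hC : ∀ i, eLpNorm (h i) s μ ≤ C) : UnifIntegrable (fun i x => g x * h i x) 1 μ := by
  intro ε hε
  have hε' : 0 < ε / (C.toReal + 1) := by positivity
  obtain ⟨δ, hδ, hgδ⟩ := hg.eLpNorm_indicator_le hr hr_top hε'
  refine ⟨δ, hδ, fun i t ht hμt => ?_⟩
  calc eLpNorm (t.indicator fun x => g x * h i x) 1 μ
      = eLpNorm (t.indicator g • h i) 1 μ := by
        congr 1; ext x; by_cases hx : x ∈ t <;> simp [hx]
    _ ≤ eLpNorm (t.indicator g) r μ * eLpNorm (h i) s μ :=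
        eLpNorm_smul_le_mul_eLpNorm (hh i) (hg.1.indicator ht)
    _ ≤ ENNReal.ofReal (ε / (C.toReal + 1)) * ENNReal.ofReal C.toReal := by
        rw [ENNReal.ofReal_toReal hC_top]; gcongr; exacts [hgδ t ht hμt, hC i]
    _ ≤ ENNReal.ofReal ε := by
        rw [← ENNReal.ofReal_mul hε'.le]
        refine ENNReal.ofReal_le_ofReal ?_
        rw [div_mul_eq_mul_div, div_le_iff₀ (by positivity)]
        nlinarith [ENNReal.toReal_nonneg (a := C)]

theorem tendsto_integral_of_unifIntegrable [IsFiniteMeasure μ] {E : Type*}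
    [NormedAddCommGroup E] [NormedSpace ℝ E] {f : ℕ → Ω → E}
    (hf : ∀ n, AEStronglyMeasurable (f n) μ) (hui : UnifIntegrable f 1 μ)
    (hae : ∀ᵐ x ∂μ, Tendsto (fun n => f n x) atTop (𝓝 0)) :
    Tendsto (fun n => ∫ x, f n x ∂μ) atTop (𝓝 0) := by
  have hL1 := tendsto_Lp_finite_of_tendsto_ae le_rfl ENNReal.one_ne_top hf MemLp.zero hui hae
  refine squeeze_zero_norm (fun n => ?_) ((ENNReal.tendsto_toReal ENNReal.zero_ne_top).comp hL1)
  rw [Function.comp_apply, sub_zero, eLpNorm_one_eq_lintegral_enorm,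
    ← integral_norm_eq_lintegral_enorm (hf n)]
  exact norm_integral_le_integral_norm _

theorem unifIntegrable_dualityMap_add_sub_mul {ι : Type*} (hp : 2 < p) {v : Ω → ℝ}
    (hv : MemLp v (ENNReal.ofReal p) μ) {w : ι → Ω → ℝ}
    (hw : ∀ i, MemLp (w i) (ENNReal.ofReal p) μ) {K : ℝ≥0∞} (hK : K ≠ ∞)
    (hwK : ∀ i, eLpNorm (w i) (ENNReal.ofReal p) μ ≤ K) :
    UnifIntegrable (fun i x =>
      (dualityMap p (v x + w i x) - dualityMap p (v x) - dualityMap p (w i x)) * w i x) 1 μ := by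
  obtain ⟨C, hC⟩ := exists_abs_dualityMap_add_sub_mul_le hp.le
  have hp0 : 0 < p := by linarith
  have hpow_le : ∀ {q : ℝ}, 0 < q → ∀ i,
      eLpNorm (fun x => |w i x| ^ q) (ENNReal.ofReal (p / q)) μ ≤ K ^ q := fun hq i => by
    rw [eLpNorm_abs_rpow hq hp0.le]; gcongr; exact hwK i
  have : ENNReal.HolderTriple (.ofReal (p / (p - 2))) (.ofReal (p / 2)) 1 :=
    have : 0 < p - 2 := by linarith
    ENNReal.ofReal_one ▸ Real.HolderTriple.ennrealOfReal
      ⟨by field_simp; ring, by positivity, by positivity⟩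
  have h₁ : UnifIntegrable (fun i x => C * |v x| ^ (p - 2) * |w i x| ^ (2 : ℝ)) 1 μ :=
    unifIntegrable_mul_of_memLp (ENNReal.one_le_ofReal.2 (by rw [le_div_iff₀] <;> linarith))
      ENNReal.ofReal_ne_top ((hv.abs_rpow (by linarith) hp0.le).const_mul C)
      (fun i => ((hw i).abs_rpow two_pos hp0.le).1)
      (ENNReal.rpow_ne_top_of_nonneg zero_le_two hK) (hpow_le two_pos)
  have : ENNReal.HolderTriple (.ofReal p) (.ofReal (p / (p - 1))) 1 :=
    (Real.HolderConjugate.conjExponent (by linarith : 1 < p)).ennrealOfReal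
  have h₂ : UnifIntegrable (fun i x => C * |v x| * |w i x| ^ (p - 1)) 1 μ :=
    unifIntegrable_mul_of_memLp (ENNReal.one_le_ofReal.2 (by linarith)) ENNReal.ofReal_ne_top
      (hv.abs.const_mul C) (fun i => ((hw i).abs_rpow (by linarith) hp0.le).1)
      (ENNReal.rpow_ne_top_of_nonneg (by linarith) hK) (hpow_le (by linarith))
  refine (h₁.add h₂ le_rfl (fun i => ?_) (fun i => ?_)).of_norm_le fun i x => ?_
  · exact ((hv.abs_rpow (by linarith) hp0.le).const_mul C).1.mul
      ((hw i).abs_rpow two_pos hp0.le).1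
  · exact (hv.abs.const_mul C).1.mul ((hw i).abs_rpow (by linarith) hp0.le).1
  · rw [Real.norm_eq_abs, Pi.add_apply, Pi.add_apply,
      Real.norm_of_nonneg ((abs_nonneg _).trans (hC _ _))]
    exact hC (v x) (w i x)

theorem tendsto_integral_dualityMap_add_sub_mul [IsFiniteMeasure μ] (hp : 2 ≤ p) {v : Ω → ℝ}
    (hv : MemLp v (ENNReal.ofReal p) μ) {w : ℕ → Ω → ℝ}
    (hw : ∀ j, MemLp (w j) (ENNReal.ofReal p) μ) {K : ℝ≥0∞} (hK : K ≠ ∞)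
    (hwK : ∀ j, eLpNorm (w j) (ENNReal.ofReal p) μ ≤ K)
    (hw0 : ∀ᵐ x ∂μ, Tendsto (fun j => w j x) atTop (𝓝 0)) :
    Tendsto (fun j => ∫ x,
      (dualityMap p (v x + w j x) - dualityMap p (v x) - dualityMap p (w j x)) * w j x ∂μ)
      atTop (𝓝 0) := by
  -- `dualityMap 2` is the identity, so the integrand vanishes.
  rcases hp.eq_or_lt with rfl | hp
  · simp [dualityMap]
  have hf := continuous_dualityMap hp.le
  refine tendsto_integral_of_unifIntegrable (fun j => ?_)
    (unifIntegrable_dualityMap_add_sub_mul hp hv hw hK hwK) ?_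
  · exact (((hf.comp_aestronglyMeasurable (hv.1.add (hw j).1)).sub
      (hf.comp_aestronglyMeasurable hv.1)).sub (hf.comp_aestronglyMeasurable (hw j).1)).mul (hw j).1
  · filter_upwards [hw0] with x hx
    simpa [dualityMap] using ((((hf.tendsto _).comp (tendsto_const_nhds.add hx)).sub
      tendsto_const_nhds).sub ((hf.tendsto 0).comp hx)).mul hx

end MeasureTheory

/-- Brezis–Lieb type identity: if `u_j ⇀ u` weakly in `L^p` and `u_j → u` a.e., then
`∫ (|u_j|^{p-2}u_j − |u|^{p-2}u)(u_j − u) dμ = ‖u_j − u‖_p^p + o(1)`. -/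
theorem brezis_lieb_weak
    {Ω : Type*} [MeasurableSpace Ω] (μ : Measure Ω) [IsFiniteMeasure μ]
    (p : ℝ) (hp : 2 ≤ p) [Fact (1 ≤ ENNReal.ofReal p)]
    (u : ℕ → Lp ℝ (ENNReal.ofReal p) μ) (v : Lp ℝ (ENNReal.ofReal p) μ)
    (hweak : ∀ φ : Ω → ℝ, MemLp φ (ENNReal.ofReal (p / (p - 1))) μ →
      Tendsto (fun j => ∫ x, u j x * φ x ∂μ) atTop (𝓝 (∫ x, v x * φ x ∂μ)))
    (hae : ∀ᵐ x ∂μ, Tendsto (fun j => u j x) atTop (𝓝 (v x))) :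
    Tendsto (fun j =>
        (∫ x, (|u j x| ^ (p - 2) * u j x - |v x| ^ (p - 2) * v x) * (u j x - v x) ∂μ)
          - ∫ x, |u j x - v x| ^ p ∂μ) atTop (𝓝 0) := by
  have hp0 : 0 < p := by linarith
  obtain ⟨C, hC⟩ := Lp.exists_norm_le_of_bddAbove_integral_mul (by linarith) fun φ hφ =>
    (hweak φ hφ).abs.bddAbove_range
  set w : ℕ → Ω → ℝ := fun j x => u j x - v x
  have hw (j : ℕ) : MemLp (w j) (ENNReal.ofReal p) μ := (Lp.memLp _).sub (Lp.memLp _)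
  have hwK (j : ℕ) : eLpNorm (w j) (ENNReal.ofReal p) μ ≤ ENNReal.ofReal C + ‖v‖ₑ := calc
    _ ≤ ‖u j‖ₑ + ‖v‖ₑ := by
      rw [Lp.enorm_def, Lp.enorm_def]
      exact eLpNorm_sub_le (Lp.aestronglyMeasurable _) (Lp.aestronglyMeasurable _) Fact.out
    _ ≤ ENNReal.ofReal C + ‖v‖ₑ := by rw [← ofReal_norm]; gcongr; exact hC j
  have hw0 : ∀ᵐ x ∂μ, Tendsto (fun j => w j x) atTop (𝓝 0) :=
    hae.mono fun x hx => by simpa using hx.sub_const (v x)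
  refine (tendsto_integral_dualityMap_add_sub_mul hp (Lp.memLp v) hw (by finiteness) hwK hw0).congr
    fun j => ?_
  have : ENNReal.HolderTriple (.ofReal (p / (p - 1))) (.ofReal p) 1 :=
    (Real.HolderConjugate.conjExponent (by linarith : 1 < p)).symm.ennrealOfReal
  have hint₁ : Integrable (fun x => (dualityMap p (u j x) - dualityMap p (v x)) * w j x) μ :=
    (((Lp.memLp _).dualityMap_comp (by linarith)).sub
      ((Lp.memLp v).dualityMap_comp (by linarith))).integrable_mul (hw j)
  have hint₂ : Integrable (fun x => |w j x| ^ p) μ := by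
    simpa [ENNReal.toReal_ofReal hp0.le] using
      (hw j).integrable_norm_rpow (by positivity) ENNReal.ofReal_ne_top
  calc _ = ∫ x, (dualityMap p (u j x) - dualityMap p (v x)) * w j x - |w j x| ^ p ∂μ :=
        integral_congr_ae (ae_of_all _ fun x => by
          simp only [w, add_sub_cancel, ← dualityMap_mul_self hp0.ne']; ring)
    _ = _ := integral_sub hint₁ hint₂
end

section
/- Let E be a real Hilbert space, (Ω, 𝒜, μ) a measure space with μ(Ω) < ∞, p > 2 a real number, and T : E → L^p(μ) a continuous linear map. Let λ* > 0 and λ ∈ ℝ with 0 < λ < λ*, and define I : E → ℝ by I(u) = (1/2)‖u‖_E² − (λ/2)∫_Ω |Tu|² dμ − (1/p)∫_Ω |Tu|^p dμ. Let W be a linear subspace of E such that ‖u‖_E² ≤ λ* ∫_Ω |Tu|² dμ for every u ∈ W. Then for every u ∈ W one has I(u) ≤ ((p−2)/(2p)) (λ* − λ)^{p/(p−2)} μ(Ω). -/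
/-!
On `W` the hypothesis `‖u‖² ≤ λ* ∫ |Tu|²` gives `I(u) ≤ ∫ ((λ* - λ)/2 |Tu|² - |Tu|^p / p) dμ`, and the
integrand is bounded pointwise by the maximum `(p - 2)/(2p) a^{p/(p-2)}` of `t ↦ a/2 t² - |t|^p / p`.
-/

open MeasureTheory

/-- Young's inequality with the conjugate exponents `p / (p - 2)` and `p / 2`, applied to
`a` and `t ^ 2`. -/
lemma mul_sq_div_two_sub_rpow_div_le {p a : ℝ} (hp : 2 < p) (ha : 0 ≤ a) (t : ℝ) :
    a / 2 * t ^ 2 - |t| ^ p / p ≤ (p - 2) / (2 * p) * a ^ (p / (p - 2)) := by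
  have hp2 : 0 < p - 2 := by linarith
  have hconj : (p / (p - 2)).HolderConjugate (p / 2) := by
    rw [Real.holderConjugate_iff]
    exact ⟨by rw [lt_div_iff₀ hp2]; linarith, by field_simp; ring⟩
  have hyoung := Real.young_inequality_of_nonneg ha (sq_nonneg |t|) hconj
  have hpow : |t| ^ p = (|t| ^ 2) ^ (p / 2) := by
    rw [← Real.rpow_natCast, ← Real.rpow_mul (abs_nonneg t)]
    norm_num [mul_div_cancel₀ p two_ne_zero]
  rw [← sq_abs t, hpow]
  calc a / 2 * |t| ^ 2 - (|t| ^ 2) ^ (p / 2) / p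
      ≤ (a ^ (p / (p - 2)) / (p / (p - 2)) + (|t| ^ 2) ^ (p / 2) / (p / 2)) / 2
        - (|t| ^ 2) ^ (p / 2) / p := by linarith
    _ = (p - 2) / (2 * p) * a ^ (p / (p - 2)) := by field_simp; ring

lemma integral_mul_sq_div_two_sub_integral_rpow_div_le {Ω : Type*} [MeasurableSpace Ω]
    {μ : Measure Ω} [IsFiniteMeasure μ] {p a : ℝ} (hp : 2 < p) (ha : 0 ≤ a) {f : Ω → ℝ}
    (hf : MemLp f (ENNReal.ofReal p) μ) :
    a / 2 * ∫ x, f x ^ 2 ∂μ - (∫ x, |f x| ^ p ∂μ) / p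
      ≤ (p - 2) / (2 * p) * a ^ (p / (p - 2)) * μ.real Set.univ := by
  have hp0 : 0 < p := by linarith
  have hsq : Integrable (fun x => f x ^ 2) μ :=
    (hf.mono_exponent (by simpa using ENNReal.ofReal_le_ofReal hp.le)).integrable_sq
  have hpow : Integrable (fun x => |f x| ^ p) μ := by
    simpa [ENNReal.toReal_ofReal hp0.le] using
      hf.integrable_norm_rpow (by simp [hp0]) ENNReal.ofReal_ne_top
  rw [← integral_const_mul, ← integral_div, ← integral_sub (hsq.const_mul _) (hpow.div_const _)]
  calc ∫ x, (a / 2 * f x ^ 2 - |f x| ^ p / p) ∂μ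
      ≤ ∫ _, (p - 2) / (2 * p) * a ^ (p / (p - 2)) ∂μ :=
        integral_mono ((hsq.const_mul _).sub (hpow.div_const _)) (integrable_const _)
          fun x => mul_sq_div_two_sub_rpow_div_le hp ha (f x)
    _ = (p - 2) / (2 * p) * a ^ (p / (p - 2)) * μ.real Set.univ := by
        rw [integral_const, smul_eq_mul, mul_comm]

theorem functional_bounded_on_W_general
    {E : Type*} [NormedAddCommGroup E] [InnerProductSpace ℝ E]
    {Ω : Type*} [MeasurableSpace Ω] (μ : Measure Ω) [IsFiniteMeasure μ]
    (p : ℝ) (hp : 2 < p) [Fact (1 ≤ ENNReal.ofReal p)]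
    (lamStar lam : ℝ) (hlam' : lam < lamStar)
    (T : E →L[ℝ] Lp ℝ (ENNReal.ofReal p) μ)
    (I : E → ℝ)
    (hI : ∀ u : E, I u = (1 / 2) * ‖u‖ ^ 2 - (lam / 2) * ∫ x, (T u x) ^ 2 ∂μ
      - (1 / p) * ∫ x, |T u x| ^ p ∂μ)
    (W : Submodule ℝ E)
    (hW : ∀ u ∈ W, ‖u‖ ^ 2 ≤ lamStar * ∫ x, (T u x) ^ 2 ∂μ) :
    ∀ u ∈ W, I u ≤ ((p - 2) / (2 * p)) * (lamStar - lam) ^ (p / (p - 2)) * (μ Set.univ).toReal := by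
  intro u hu
  have hI_le : I u ≤ (lamStar - lam) / 2 * ∫ x, (T u x) ^ 2 ∂μ - (∫ x, |T u x| ^ p ∂μ) / p := by
    rw [hI u, one_div_mul_eq_div p]
    linarith [hW u hu]
  exact hI_le.trans <| integral_mul_sq_div_two_sub_integral_rpow_div_le hp (sub_nonneg.2 hlam'.le)
    (Lp.memLp (T u))

/-- Upper bound for the functional on the subspace `W` spanned by low eigenfunctions. -/
theorem functional_bounded_on_W
    {E : Type*} [NormedAddCommGroup E] [InnerProductSpace ℝ E] [CompleteSpace E]
    {Ω : Type*} [MeasurableSpace Ω] (μ : Measure Ω) [IsFiniteMeasure μ]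
    (p : ℝ) (hp : 2 < p) [Fact (1 ≤ ENNReal.ofReal p)]
    (lamStar lam : ℝ) (hlam : 0 < lam) (hlam' : lam < lamStar)
    (T : E →L[ℝ] Lp ℝ (ENNReal.ofReal p) μ)
    (I : E → ℝ)
    (hI : ∀ u : E, I u = (1 / 2) * ‖u‖ ^ 2 - (lam / 2) * ∫ x, (T u x) ^ 2 ∂μ
      - (1 / p) * ∫ x, |T u x| ^ p ∂μ)
    (W : Submodule ℝ E)
    (hW : ∀ u ∈ W, ‖u‖ ^ 2 ≤ lamStar * ∫ x, (T u x) ^ 2 ∂μ) :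
    ∀ u ∈ W, I u ≤ ((p - 2) / (2 * p)) * (lamStar - lam) ^ (p / (p - 2)) * (μ Set.univ).toReal :=
  functional_bounded_on_W_general μ p hp lamStar lam hlam' T I hI W hW
end
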